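/- Let A be the set of prime numbers and N ∈ ℕ. If L, U ∈ ℝ satisfy 0 ≤ L < E[τ_{N+i}] < U for all 1 ≤ i ≤ 6, then E_{N,0}[τ_0] + L·SP_N(0) < E[τ] < E_{N,0}[τ_0] + U·SP_N(0). In particular, E[τ] is approximated by E_{N,0}[τ_0] with error at most SP_N(0)·(U − L). -/

import Mathlib

open MeasureTheory ProbabilityTheory
open scoped ENNReal NNReal

noncomputable section

/-- The cumulative sum `S_t^(s) = s + X_1 + ... + X_t`, where the die faces are
`ω 0 + 1, ω 1 + 1, ...` (each in `{1,...,6}`). -/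
def partialSum (s : ℕ) (ω : ℕ → Fin 6) (t : ℕ) : ℕ :=
  s + ∑ j ∈ Finset.range t, ((ω j : ℕ) + 1)

/-- The hitting time `τ_s = inf {t : S_t^(s) ∈ A}`, with value `⊤` if the sum never hits `A`. -/
def hitTime (A : Set ℕ) (s : ℕ) (ω : ℕ → Fin 6) : ℕ∞ :=
  sInf {t : ℕ∞ | ∃ n : ℕ, t = (n : ℕ∞) ∧ partialSum s ω n ∈ A}

/-- The expectation `E[τ_s]`, as a Lebesgue integral with values in `[0,∞]`. -/
def hitExp (P : Measure (ℕ → Fin 6)) (A : Set ℕ) (s : ℕ) : ℝ≥0∞ :=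
  ∫⁻ ω, (hitTime A s ω : ℝ≥0∞) ∂P

open Classical in
/-- The truncated expectation `E_{N,B}[τ_s]`, defined by backward recursion. -/
def EC (A : Set ℕ) (N : ℕ) (B : ℝ) (s : ℕ) : ℝ :=
  if N < s then B
  else if s ∈ A then 0
  else 1 + (1/6) * ∑ i ∈ Finset.range 6, EC A N B (s + i + 1)
termination_by N + 1 - s
decreasing_by omega

open Classical in
/-- The survival probability `SP_N(s)`, defined by backward recursion. -/
def SP (A : Set ℕ) (N : ℕ) (s : ℕ) : ℝ :=
  if N < s then 1
  else if s ∈ A then 0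
  else (1/6) * ∑ i ∈ Finset.range 6, SP A N (s + i + 1)
termination_by N + 1 - s
decreasing_by omega

/-!
Writing `E[τ_s] = ∑ₜ P(τ_s > t)` and counting the die sequences that avoid `A` shows that, off `A`,
`E[τ_s] = 1 + (1/6) ∑ᵢ E[τ_{s+i}]`: the same first-step equations that define `E_{N,B}` on
`[0, N]`, and `E_{N,B} = E_{N,0} + B · SP_N` since the equations are affine. The difference of
two solutions vanishes on `A ∩ [0, N]` and is the mean of its six successors elsewhere, so a strict
inequality on the boundary `(N, N + 6]` propagates down to `0`: some successor is not prime,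
since six consecutive numbers contain a multiple of six.
-/

lemma Nat.exists_lt_six_not_prime_add_succ (s : ℕ) : ∃ i < 6, ¬ (s + i + 1).Prime := by
  refine ⟨5 - s % 6, by omega, ?_⟩
  rw [show s + (5 - s % 6) + 1 = 2 * (3 * (s / 6 + 1)) by omega]
  exact Nat.not_prime_mul (by norm_num) (by omega)

lemma ENNReal.lt_toReal_of_ofReal_lt {a : ℝ} {b : ℝ≥0∞} (h : ENNReal.ofReal a < b)
    (hb : b ≠ ⊤) : a < b.toReal := by
  rw [← ENNReal.ofReal_toReal hb, ENNReal.ofReal_lt_ofReal_iff'] at h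
  exact h.1

lemma ENat.toENNReal_eq_tsum_indicator (x : ℕ∞) :
    (x : ℝ≥0∞) = ∑' t : ℕ, {t : ℕ | (t : ℕ∞) < x}.indicator (fun _ => 1) t := by
  rw [← tsum_subtype, ENNReal.tsum_set_one]
  congr
  induction x using ENat.recTopCoe with
  | top => simp
  | coe n => simpa using (Set.Nat.encard_range n).symm

section HittingTime

variable {A : Set ℕ} {s t : ℕ}

lemma partialSum_succ (s : ℕ) (ω : ℕ → Fin 6) (k : ℕ) :
    partialSum s ω (k + 1) = partialSum (s + ω 0 + 1) (fun j => ω (j + 1)) k := by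
  simp only [partialSum, Finset.sum_range_succ']
  ring

lemma partialSum_congr {ω ω' : ℕ → Fin 6} {k : ℕ} (h : ∀ j < k, ω j = ω' j) :
    partialSum s ω k = partialSum s ω' k := by
  unfold partialSum
  rw [Finset.sum_congr rfl fun j hj => by rw [h j (Finset.mem_range.1 hj)]]

lemma measurable_partialSum (s k : ℕ) : Measurable fun ω : ℕ → Fin 6 => partialSum s ω k :=
  measurable_const.add <| Finset.measurable_sum _ fun j _ =>
    (measurable_from_top (f := fun x : Fin 6 => (x : ℕ) + 1)).comp (measurable_pi_apply j)

def survivalSet (A : Set ℕ) (s t : ℕ) : Set (ℕ → Fin 6) :=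
  {ω | ∀ k ≤ t, partialSum s ω k ∉ A}

lemma measurableSet_survivalSet (A : Set ℕ) (s t : ℕ) : MeasurableSet (survivalSet A s t) := by
  simp only [survivalSet, Set.ofPred_forall]
  exact MeasurableSet.iInter fun k => MeasurableSet.iInter fun _ =>
    measurable_partialSum s k (MeasurableSet.of_discrete (s := Aᶜ))

lemma lt_hitTime_iff {ω : ℕ → Fin 6} : (t : ℕ∞) < hitTime A s ω ↔ ω ∈ survivalSet A s t := by
  refine ⟨fun h k hk hA => ?_, fun h => ?_⟩
  · have : hitTime A s ω ≤ k := sInf_le ⟨k, rfl, hA⟩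
    exact (h.trans_le (this.trans (Nat.cast_le.2 hk))).false
  · have : ((t + 1 : ℕ) : ℕ∞) ≤ hitTime A s ω := by
      refine le_sInf ?_
      rintro _ ⟨n, rfl, hn⟩
      exact Nat.cast_le.2 (by by_contra; exact h n (by omega) hn)
    exact lt_of_lt_of_le (by exact_mod_cast t.lt_succ_self) this

lemma survivalSet_succ_iff (hs : s ∉ A) {ω : ℕ → Fin 6} :
    ω ∈ survivalSet A s (t + 1) ↔ (fun j => ω (j + 1)) ∈ survivalSet A (s + ω 0 + 1) t := by
  refine ⟨fun h k hk => ?_, fun h k hk => ?_⟩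
  · rw [← partialSum_succ]
    exact h (k + 1) (by omega)
  · cases k with
    | zero => simpa [partialSum] using hs
    | succ k => rw [partialSum_succ]; exact h k (by omega)

theorem hitExp_eq_tsum_measure_survivalSet (P : Measure (ℕ → Fin 6)) (A : Set ℕ) (s : ℕ) :
    hitExp P A s = ∑' t, P (survivalSet A s t) := by
  have hτ (ω : ℕ → Fin 6) :
      (hitTime A s ω : ℝ≥0∞) = ∑' t, (survivalSet A s t).indicator 1 ω := by
    classical
    rw [ENat.toENNReal_eq_tsum_indicator]
    refine tsum_congr fun t => ?_
    simp only [Set.indicator, Set.mem_ofPred_eq, Pi.one_apply]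
    exact if_congr lt_hitTime_iff rfl rfl
  rw [hitExp, lintegral_congr hτ, lintegral_tsum fun t =>
    (measurable_one.indicator (measurableSet_survivalSet A s t)).aemeasurable]
  exact tsum_congr fun t => lintegral_indicator_one (measurableSet_survivalSet A s t)

lemma hitExp_of_mem (P : Measure (ℕ → Fin 6)) (hs : s ∈ A) : hitExp P A s = 0 := by
  have hτ (ω : ℕ → Fin 6) : hitTime A s ω = 0 :=
    le_antisymm (sInf_le ⟨0, rfl, by simpa [partialSum] using hs⟩) bot_le
  simp [hitExp, hτ]

end HittingTime

section Counting

variable {A : Set ℕ} {s t : ℕ} {P : Measure (ℕ → Fin 6)}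

def extendByZero {t : ℕ} (v : Fin t → Fin 6) : ℕ → Fin 6 :=
  fun j => if h : j < t then v ⟨j, h⟩ else 0

lemma extendByZero_cons_zero (i : Fin 6) (w : Fin t → Fin 6) :
    extendByZero (Fin.cons i w : Fin (t + 1) → Fin 6) 0 = i := by
  simp [extendByZero]

lemma extendByZero_cons_succ (i : Fin 6) (w : Fin t → Fin 6) :
    (fun j => extendByZero (Fin.cons i w : Fin (t + 1) → Fin 6) (j + 1)) = extendByZero w := by
  funext j
  by_cases hj : j < t
  · simp only [extendByZero, hj, show j + 1 < t + 1 by omega, dite_true]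
    exact Fin.cons_succ (α := fun _ => Fin 6) i w ⟨j, hj⟩
  · simp [extendByZero, hj, show ¬ j + 1 < t + 1 by omega]

def prefixSet {t : ℕ} (v : Fin t → Fin 6) : Set (ℕ → Fin 6) :=
  {ω | ∀ j : Fin t, ω j = v j}

open Classical in
def survivingPaths (A : Set ℕ) (s t : ℕ) : Finset (Fin t → Fin 6) :=
  Finset.univ.filter fun v => extendByZero v ∈ survivalSet A s t

lemma mem_survivalSet_iff_of_mem_prefixSet {v : Fin t → Fin 6} {ω : ℕ → Fin 6}
    (hω : ω ∈ prefixSet v) : ω ∈ survivalSet A s t ↔ extendByZero v ∈ survivalSet A s t := by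
  have hagree (k : ℕ) (hk : k ≤ t) : partialSum s ω k = partialSum s (extendByZero v) k :=
    partialSum_congr fun j hj => by
      simp [extendByZero, show j < t by omega, ← hω ⟨j, by omega⟩]
  exact forall₂_congr fun k hk => by rw [hagree k hk]

lemma survivalSet_eq_biUnion_prefixSet (A : Set ℕ) (s t : ℕ) :
    survivalSet A s t = ⋃ v ∈ survivingPaths A s t, prefixSet v := by
  ext ω
  simp only [Set.mem_iUnion, survivingPaths, Finset.mem_filter, Finset.mem_univ, true_and,
    exists_prop]
  refine ⟨fun h => ⟨fun j => ω j, ?_, fun j => rfl⟩, fun ⟨v, hv, hω⟩ => ?_⟩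
  · exact (mem_survivalSet_iff_of_mem_prefixSet fun j => rfl).1 h
  · exact (mem_survivalSet_iff_of_mem_prefixSet hω).2 hv

lemma pairwiseDisjoint_prefixSet (S : Finset (Fin t → Fin 6)) :
    (S : Set (Fin t → Fin 6)).PairwiseDisjoint prefixSet := by
  intro v _ w _ hvw
  refine Set.disjoint_left.2 fun ω hv hw => hvw (funext fun j => ?_)
  rw [← hv j, hw j]

lemma measurableSet_prefixSet (v : Fin t → Fin 6) : MeasurableSet (prefixSet v) := by
  simp only [prefixSet, Set.ofPred_forall]
  exact MeasurableSet.iInter fun j => measurable_pi_apply _ (measurableSet_singleton _)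

lemma measure_prefixSet (hIndep : iIndepFun (fun n (ω : ℕ → Fin 6) => ω n) P)
    (hUnif : ∀ (n : ℕ) (i : Fin 6), P {ω | ω n = i} = 1 / 6) (v : Fin t → Fin 6) :
    P (prefixSet v) = (1 / 6) ^ t := by
  have h := (hIndep.precomp Fin.val_injective).meas_iInter
    (s := fun j : Fin t => {ω : ℕ → Fin 6 | ω j = v j})
    (fun j => ⟨{v j}, measurableSet_singleton _, rfl⟩)
  simp only [prefixSet, Set.ofPred_forall, h, hUnif, Finset.prod_const, Finset.card_univ,
    Fintype.card_fin]

lemma measure_survivalSet (hIndep : iIndepFun (fun n (ω : ℕ → Fin 6) => ω n) P)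
    (hUnif : ∀ (n : ℕ) (i : Fin 6), P {ω | ω n = i} = 1 / 6) (A : Set ℕ) (s t : ℕ) :
    P (survivalSet A s t) = (survivingPaths A s t).card * (1 / 6) ^ t := by
  rw [survivalSet_eq_biUnion_prefixSet, measure_biUnion_finset (pairwiseDisjoint_prefixSet _)
    fun v _ => measurableSet_prefixSet v]
  simp [measure_prefixSet hIndep hUnif]

lemma card_survivingPaths_zero (hs : s ∉ A) : (survivingPaths A s 0).card = 1 := by
  simp [survivingPaths, survivalSet, partialSum, hs]

lemma cons_mem_survivingPaths_iff (hs : s ∉ A) (i : Fin 6) (w : Fin t → Fin 6) :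
    Fin.cons i w ∈ survivingPaths A s (t + 1) ↔ w ∈ survivingPaths A (s + i + 1) t := by
  simp only [survivingPaths, Finset.mem_filter, Finset.mem_univ, true_and,
    survivalSet_succ_iff hs, extendByZero_cons_zero, extendByZero_cons_succ]

lemma card_survivingPaths_succ (hs : s ∉ A) :
    (survivingPaths A s (t + 1)).card = ∑ i : Fin 6, (survivingPaths A (s + i + 1) t).card := by
  rw [← Finset.card_sigma]
  refine Finset.card_nbij' (fun v => ⟨v 0, Fin.tail v⟩) (fun p => Fin.cons p.1 p.2)
    (fun v hv => ?_) (fun p hp => ?_) (fun v _ => Fin.cons_self_tail v) (fun p _ => ?_)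
  · rw [Finset.mem_coe, ← Fin.cons_self_tail v, cons_mem_survivingPaths_iff hs] at hv
    simpa using hv
  · simpa [cons_mem_survivingPaths_iff hs] using hp
  · simp

theorem hitExp_eq_one_add (hIndep : iIndepFun (fun n (ω : ℕ → Fin 6) => ω n) P)
    (hUnif : ∀ (n : ℕ) (i : Fin 6), P {ω | ω n = i} = 1 / 6) (hs : s ∉ A) :
    hitExp P A s = 1 + 1 / 6 * ∑ i ∈ Finset.range 6, hitExp P A (s + i + 1) := by
  have hstep (t : ℕ) : P (survivalSet A s (t + 1)) =
      ∑ i ∈ Finset.range 6, 1 / 6 * P (survivalSet A (s + i + 1) t) := by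
    simp only [measure_survivalSet hIndep hUnif, card_survivingPaths_succ hs, Nat.cast_sum,
      ← Fin.sum_univ_eq_sum_range (fun i => 1 / 6 * ((survivingPaths A (s + i + 1) t).card *
        (1 / 6 : ℝ≥0∞) ^ t)), Finset.sum_mul, pow_succ]
    exact Finset.sum_congr rfl fun i _ => by ring
  rw [hitExp_eq_tsum_measure_survivalSet, tsum_eq_zero_add' ENNReal.summable, tsum_congr hstep,
    Summable.tsum_finsetSum fun _ _ => ENNReal.summable, Finset.mul_sum]
  congr 1
  · simp [measure_survivalSet hIndep hUnif, card_survivingPaths_zero hs]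
  · simp only [ENNReal.tsum_mul_left, hitExp_eq_tsum_measure_survivalSet]

end Counting

section TruncatedRecursion

variable {A : Set ℕ} {N : ℕ} {s : ℕ}

lemma EC_of_lt (B : ℝ) (h : N < s) : EC A N B s = B := by
  rw [EC, if_pos h]

lemma EC_of_mem (B : ℝ) (hN : s ≤ N) (hs : s ∈ A) : EC A N B s = 0 := by
  rw [EC, if_neg (not_lt.2 hN), if_pos hs]

lemma EC_of_notMem (B : ℝ) (hN : s ≤ N) (hs : s ∉ A) :
    EC A N B s = 1 + 1 / 6 * ∑ i ∈ Finset.range 6, EC A N B (s + i + 1) := by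
  rw [EC, if_neg (not_lt.2 hN), if_neg hs]

lemma SP_of_lt (h : N < s) : SP A N s = 1 := by
  rw [SP, if_pos h]

lemma SP_of_mem (hN : s ≤ N) (hs : s ∈ A) : SP A N s = 0 := by
  rw [SP, if_neg (not_lt.2 hN), if_pos hs]

lemma SP_of_notMem (hN : s ≤ N) (hs : s ∉ A) :
    SP A N s = 1 / 6 * ∑ i ∈ Finset.range 6, SP A N (s + i + 1) := by
  rw [SP, if_neg (not_lt.2 hN), if_neg hs]

theorem EC_eq_EC_zero_add_mul_SP (A : Set ℕ) (N : ℕ) (B : ℝ) (s : ℕ) :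
    EC A N B s = EC A N 0 s + B * SP A N s := by
  induction s using EC.induct A N with
  | case1 s h => rw [EC_of_lt _ h, EC_of_lt _ h, SP_of_lt h]; ring
  | case2 s h hs =>
    rw [EC_of_mem _ (not_lt.1 h) hs, EC_of_mem _ (not_lt.1 h) hs, SP_of_mem (not_lt.1 h) hs]
    ring
  | case3 s h hs ih =>
    rw [EC_of_notMem _ (not_lt.1 h) hs, EC_of_notMem _ (not_lt.1 h) hs,
      SP_of_notMem (not_lt.1 h) hs, Finset.sum_congr rfl fun i _ => ih i,
      Finset.sum_add_distrib, ← Finset.mul_sum]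
    ring

end TruncatedRecursion

section FirstStepEquations

variable {A : Set ℕ} {N : ℕ} {s : ℕ} {P : Measure (ℕ → Fin 6)}

structure SolvesFirstStep (A : Set ℕ) (N : ℕ) (f : ℕ → ℝ) : Prop where
  eq_zero_of_mem : ∀ s ≤ N, s ∈ A → f s = 0
  eq_one_add : ∀ s ≤ N, s ∉ A → f s = 1 + 1 / 6 * ∑ i ∈ Finset.range 6, f (s + i + 1)

lemma solvesFirstStep_EC (A : Set ℕ) (N : ℕ) (B : ℝ) : SolvesFirstStep A N (EC A N B) :=
  ⟨fun _ hN hs => EC_of_mem B hN hs, fun _ hN hs => EC_of_notMem B hN hs⟩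

theorem SolvesFirstStep.lt_of_lt_boundary {f g : ℕ → ℝ} (hf : SolvesFirstStep A N f)
    (hg : SolvesFirstStep A N g) (hA : ∀ s, ∃ i < 6, s + i + 1 ∉ A)
    (hbd : ∀ s, N < s → s ≤ N + 6 → g s < f s) (hs : s ≤ N + 6) (hsA : s ∉ A) : g s < f s := by
  suffices ∀ s, s ≤ N + 6 → g s ≤ f s ∧ (s ∉ A → g s < f s) from (this s hs).2 hsA
  intro s
  induction s using EC.induct A N with
  | case1 s hN =>
    intro hs
    exact ⟨(hbd s hN hs).le, fun _ => hbd s hN hs⟩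
  | case2 s hN hsA =>
    intro _
    rw [hf.eq_zero_of_mem s (not_lt.1 hN) hsA, hg.eq_zero_of_mem s (not_lt.1 hN) hsA]
    exact ⟨le_rfl, fun h => absurd hsA h⟩
  | case3 s hN hsA ih =>
    intro _
    have hchild (i : ℕ) (hi : i ∈ Finset.range 6) :=
      ih i (by rw [Finset.mem_range] at hi; omega)
    obtain ⟨j, hj, hjA⟩ := hA s
    have hsum : ∑ i ∈ Finset.range 6, g (s + i + 1) < ∑ i ∈ Finset.range 6, f (s + i + 1) :=
      Finset.sum_lt_sum (fun i hi => (hchild i hi).1)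
        ⟨j, Finset.mem_range.2 hj, (hchild j (Finset.mem_range.2 hj)).2 hjA⟩
    rw [hf.eq_one_add s (not_lt.1 hN) hsA, hg.eq_one_add s (not_lt.1 hN) hsA]
    exact ⟨by linarith, fun _ => by linarith⟩

theorem hitExp_ne_top_of_boundary (hIndep : iIndepFun (fun n (ω : ℕ → Fin 6) => ω n) P)
    (hUnif : ∀ (n : ℕ) (i : Fin 6), P {ω | ω n = i} = 1 / 6)
    (hbd : ∀ s, N < s → s ≤ N + 6 → hitExp P A s ≠ ⊤) (hs : s ≤ N + 6) : hitExp P A s ≠ ⊤ := by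
  induction s using EC.induct A N with
  | case1 s hN => exact hbd s hN hs
  | case2 s _ hsA => simp [hitExp_of_mem P hsA]
  | case3 s hN hsA ih =>
    rw [hitExp_eq_one_add hIndep hUnif hsA]
    refine ENNReal.add_ne_top.2 ⟨ENNReal.one_ne_top, ENNReal.mul_ne_top (by norm_num) ?_⟩
    exact ENNReal.sum_ne_top.2 fun i hi => ih i (by rw [Finset.mem_range] at hi; omega)

theorem solvesFirstStep_toReal_hitExp (hIndep : iIndepFun (fun n (ω : ℕ → Fin 6) => ω n) P)
    (hUnif : ∀ (n : ℕ) (i : Fin 6), P {ω | ω n = i} = 1 / 6)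
    (hfin : ∀ s ≤ N + 6, hitExp P A s ≠ ⊤) :
    SolvesFirstStep A N fun s => (hitExp P A s).toReal := by
  refine ⟨fun s _ hs => by simp [hitExp_of_mem P hs], fun s hN hs => ?_⟩
  have hchild : ∀ i ∈ Finset.range 6, hitExp P A (s + i + 1) ≠ ⊤ := fun i hi =>
    hfin _ (by rw [Finset.mem_range] at hi; omega)
  rw [hitExp_eq_one_add hIndep hUnif hs, ENNReal.toReal_add ENNReal.one_ne_top
    (ENNReal.mul_ne_top (by norm_num) (ENNReal.sum_ne_top.2 hchild)), ENNReal.toReal_mul,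
    ENNReal.toReal_sum hchild]
  norm_num

end FirstStepEquations

theorem squeeze_with_survival_general
    (P : Measure (ℕ → Fin 6))
    (hIndep : iIndepFun (fun n (ω : ℕ → Fin 6) => ω n) P)
    (hUnif : ∀ (n : ℕ) (i : Fin 6), P {ω | ω n = i} = 1 / 6) (N : ℕ) (L U : ℝ)
    (hLU : ∀ i : ℕ, 1 ≤ i → i ≤ 6 →
      ENNReal.ofReal L < hitExp P {n | n.Prime} (N + i) ∧
        hitExp P {n | n.Prime} (N + i) < ENNReal.ofReal U) :
    ENNReal.ofReal (EC {n | n.Prime} N 0 0 + L * SP {n | n.Prime} N 0)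
        < hitExp P {n | n.Prime} 0 ∧
      hitExp P {n | n.Prime} 0
        < ENNReal.ofReal (EC {n | n.Prime} N 0 0 + U * SP {n | n.Prime} N 0) := by
  set A : Set ℕ := {n | n.Prime}
  have hbd (s : ℕ) (h₁ : N < s) (h₂ : s ≤ N + 6) :
      ENNReal.ofReal L < hitExp P A s ∧ hitExp P A s < ENNReal.ofReal U := by
    simpa [show N + (s - N) = s by omega] using hLU (s - N) (by omega) (by omega)
  have hfin (s : ℕ) (hs : s ≤ N + 6) : hitExp P A s ≠ ⊤ :=
    hitExp_ne_top_of_boundary hIndep hUnif (fun s h₁ h₂ => (hbd s h₁ h₂).2.ne_top) hs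
  have hbdReal (s : ℕ) (h₁ : N < s) (h₂ : s ≤ N + 6) :
      EC A N L s < (hitExp P A s).toReal ∧ (hitExp P A s).toReal < EC A N U s := by
    rw [EC_of_lt L h₁, EC_of_lt U h₁]
    exact ⟨ENNReal.lt_toReal_of_ofReal_lt (hbd s h₁ h₂).1 (hfin s h₂),
      (ENNReal.lt_ofReal_iff_toReal_lt (hfin s h₂)).1 (hbd s h₁ h₂).2⟩
  have hE := solvesFirstStep_toReal_hitExp hIndep hUnif hfin
  have hlo := hE.lt_of_lt_boundary (solvesFirstStep_EC A N L)
    Nat.exists_lt_six_not_prime_add_succ (fun s h₁ h₂ => (hbdReal s h₁ h₂).1)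
    (Nat.zero_le _) Nat.not_prime_zero
  have hhi := (solvesFirstStep_EC A N U).lt_of_lt_boundary hE
    Nat.exists_lt_six_not_prime_add_succ (fun s h₁ h₂ => (hbdReal s h₁ h₂).2)
    (Nat.zero_le _) Nat.not_prime_zero
  have hpos : 0 < (hitExp P A 0).toReal := by
    rw [hE.eq_one_add 0 (Nat.zero_le _) Nat.not_prime_zero]
    positivity
  rw [← EC_eq_EC_zero_add_mul_SP, ← EC_eq_EC_zero_add_mul_SP,
    ← ENNReal.ofReal_toReal (hfin 0 (Nat.zero_le _))]
  exact ⟨ENNReal.ofReal_lt_ofReal_iff'.2 ⟨hlo, hpos⟩,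
    ENNReal.ofReal_lt_ofReal_iff'.2 ⟨hhi, hpos.trans hhi⟩⟩

/-- If `0 ≤ L < E[τ_{N+i}] < U` for all `1 ≤ i ≤ 6`, then
`E_{N,0}[τ_0] + L·SP_N(0) < E[τ] < E_{N,0}[τ_0] + U·SP_N(0)`,
where `A` is the set of primes.  In particular, `E[τ]` is approximated by
`E_{N,0}[τ_0]` with error at most `SP_N(0)·(U − L)`. -/
theorem squeeze_with_survival
    (P : Measure (ℕ → Fin 6)) [IsProbabilityMeasure P]
    (hIndep : iIndepFun (fun n (ω : ℕ → Fin 6) => ω n) P)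
    (hUnif : ∀ (n : ℕ) (i : Fin 6), P {ω | ω n = i} = 1 / 6) (N : ℕ) (L U : ℝ) (hL : 0 ≤ L)
    (hLU : ∀ i : ℕ, 1 ≤ i → i ≤ 6 →
      ENNReal.ofReal L < hitExp P {n | n.Prime} (N + i) ∧
        hitExp P {n | n.Prime} (N + i) < ENNReal.ofReal U) :
    ENNReal.ofReal (EC {n | n.Prime} N 0 0 + L * SP {n | n.Prime} N 0)
        < hitExp P {n | n.Prime} 0 ∧
      hitExp P {n | n.Prime} 0
        < ENNReal.ofReal (EC {n | n.Prime} N 0 0 + U * SP {n | n.Prime} N 0) :=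
  squeeze_with_survival_general P hIndep hUnif N L U hLU
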